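/- arXiv:0911.2907 — 4 statements merged into one kernel-verified Lean document; each statement's English description precedes it below -/
import Mathlib

section
/- The shift basis functions are linearly independent: let F be a field, f : {0,1}^n → F a function, and x̂ ∈ {0,1}^n a point with f(x̂) ≠ 0. For i = 1,…,n define s_i(x) = 0 if x_i = x̂_i, and s_i(x) = (−1)^{|x+x̂|_1^{i−1}} · f(x + e_i) if x_i ≠ x̂_i (where x + x̂ is bitwise XOR, e_i is the i-th standard bit vector, and |y|_1^{i−1} = y_1 + ⋯ + y_{i−1}). Then s_1,…,s_n, viewed as vectors in F^{2^n}, are linearly independent. -/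
open Finset

/-- Bitwise XOR of bit strings. -/
def bxor {n : ℕ} (x y : Fin n → Bool) : Fin n → Bool := fun i => xor (x i) (y i)

/-- The standard unit bit string `e i`. -/
def eVec {n : ℕ} (i : Fin n) : Fin n → Bool := fun j => decide (j = i)

/-- Hamming weight of a bit string. -/
def wt {n : ℕ} (x : Fin n → Bool) : ℕ := (Finset.univ.filter (fun i => x i = true)).card

/-- Partial Hamming weight `|x|_1^{i-1}`: number of ones strictly below position `i`. -/
def pwt {n : ℕ} (x : Fin n → Bool) (i : Fin n) : ℕ :=
  (Finset.univ.filter (fun j => j < i ∧ x j = true)).card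

/-- The shift basis functions `s_i^f` with base point `xh`. -/
def shiftBasis {F : Type*} [Field F] {n : ℕ} (f : (Fin n → Bool) → F) (xh : Fin n → Bool)
    (i : Fin n) : (Fin n → Bool) → F := fun x =>
  if x i = xh i then 0 else (-1 : F) ^ (pwt (bxor x xh) i) * f (bxor x (eVec i))

/-- The Pfaffian of an `n × n` matrix, defined by recursive expansion along the last
row/column (agreeing with the usual sum over pairings for strongly skew-symmetric matrices). -/
def pf {R : Type*} [CommRing R] : (n : ℕ) → Matrix (Fin n) (Fin n) R → R
  | 0, _ => 1
  | 1, _ => 0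
  | n+2, M => ∑ i : Fin (n+1),
      (-1 : R) ^ (i : ℕ) * M i.castSucc (Fin.last (n+1)) *
        pf n (M.submatrix (fun j => (i.succAbove j).castSucc)
          (fun j => (i.succAbove j).castSucc))

/-- The sub-Pfaffian `Pf(M_x)`: Pfaffian of the principal submatrix of `M` keeping
row and column `i` exactly when `x i = true`. -/
def subPf {R : Type*} [CommRing R] {n : ℕ} (M : Matrix (Fin n) (Fin n) R)
    (x : Fin n → Bool) : R :=
  let s : Finset (Fin n) := Finset.univ.filter (fun i => x i = true)
  pf s.card (M.submatrix (fun j => s.orderEmbOfFin rfl j) (fun j => s.orderEmbOfFin rfl j))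

/-- A matrix is strongly skew-symmetric if `Mᵀ = -M` and all diagonal entries vanish. -/
def StronglySkew {R : Type*} [CommRing R] {n : ℕ} (M : Matrix (Fin n) (Fin n) R) : Prop :=
  (∀ i j, M j i = -M i j) ∧ ∀ i, M i i = 0

/-- `f` is an `n`-bit standard signature over `F`: it is identically zero, or a
translation and nonzero scaling of a sub-Pfaffian function `x ↦ Pf(M_x)` of a
strongly skew-symmetric matrix. -/
def IsStdSig {F : Type*} [Field F] {n : ℕ} (f : (Fin n → Bool) → F) : Prop :=
  (∀ x, f x = 0) ∨
  ∃ (β : F) (xh : Fin n → Bool) (M : Matrix (Fin n) (Fin n) F),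
    β ≠ 0 ∧ StronglySkew M ∧ ∀ x, f x = β * subPf M (bxor x xh)

/-- Strictly even parity standard signatures (the set `A_n^{even}`). -/
def IsEvenSig {F : Type*} [Field F] {n : ℕ} (f : (Fin n → Bool) → F) : Prop :=
  IsStdSig f ∧ (∃ x, f x ≠ 0) ∧ ∀ x, Odd (wt x) → f x = 0

/-- Strictly odd parity standard signatures (the set `A_n^{odd}`). -/
def IsOddSig {F : Type*} [Field F] {n : ℕ} (f : (Fin n → Bool) → F) : Prop :=
  IsStdSig f ∧ (∃ x, f x ≠ 0) ∧ ∀ x, Even (wt x) → f x = 0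

/-- `B_n`: the set of normalized standard signatures, i.e. sub-Pfaffian functions. -/
def Bset (F : Type*) [Field F] (n : ℕ) : Set ((Fin n → Bool) → F) :=
  {f | ∃ M : Matrix (Fin n) (Fin n) F, StronglySkew M ∧ ∀ x, f x = subPf M x}

/-! The evaluation matrix of `s_1, …, s_n` at the points `x̂ + e_j` is diagonal: the `i`-th bit
of `x̂ + e_j` agrees with `x̂` for `i ≠ j`, so `s_i` vanishes there, while
`s_j(x̂ + e_j) = (-1)^{|e_j|_1^{j-1}} f(x̂) = f(x̂) ≠ 0`. -/

theorem linearIndependent_of_apply_eq_zero_of_ne {ι α R : Type*} [Ring R] [IsDomain R]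
    {v : ι → α → R} (p : ι → α) (hoff : ∀ i j, i ≠ j → v i (p j) = 0)
    (hdiag : ∀ i, v i (p i) ≠ 0) : LinearIndependent R v := by
  classical
  refine LinearIndependent.of_comp (LinearMap.funLeft R R p) ?_
  have hsingle : LinearMap.funLeft R R p ∘ v = fun i => Pi.single i (v i (p i)) := by
    ext i j
    obtain rfl | hij := eq_or_ne i j
    · simp [LinearMap.funLeft]
    · simp [LinearMap.funLeft, hoff i j hij, hij.symm]
  rw [hsingle]
  exact Pi.linearIndependent_single_of_ne_zero hdiag

section BitStrings

variable {n : ℕ}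

theorem bxor_bxor_cancel_right (x y : Fin n → Bool) : bxor (bxor x y) y = x := by
  funext i
  simp [bxor]

theorem bxor_bxor_cancel_left (x y : Fin n → Bool) : bxor (bxor x y) x = y := by
  funext i
  simp [bxor, Bool.xor_comm]

theorem bxor_eVec_apply_of_ne (x : Fin n → Bool) {i j : Fin n} (h : i ≠ j) :
    bxor x (eVec j) i = x i := by
  simp [bxor, eVec, h]

theorem bxor_eVec_apply_self (x : Fin n → Bool) (i : Fin n) : bxor x (eVec i) i = !x i := by
  simp [bxor, eVec]

theorem pwt_eVec_self (i : Fin n) : pwt (eVec i) i = 0 := by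
  simp only [pwt, eVec, decide_eq_true_eq, Finset.card_eq_zero, Finset.filter_eq_empty_iff]
  rintro j - ⟨hlt, rfl⟩
  exact lt_irrefl j hlt

end BitStrings

section ShiftBasis

variable {F : Type*} [Field F] {n : ℕ} (f : (Fin n → Bool) → F) (xh : Fin n → Bool)

theorem shiftBasis_apply_bxor_eVec_of_ne {i j : Fin n} (h : i ≠ j) :
    shiftBasis f xh i (bxor xh (eVec j)) = 0 :=
  if_pos (bxor_eVec_apply_of_ne xh h)

theorem shiftBasis_apply_bxor_eVec_self (i : Fin n) :
    shiftBasis f xh i (bxor xh (eVec i)) = f xh := by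
  rw [shiftBasis, if_neg (by simp [bxor_eVec_apply_self]), bxor_bxor_cancel_left,
    bxor_bxor_cancel_right, pwt_eVec_self, pow_zero, one_mul]

end ShiftBasis

/-- the shift basis functions of `f` at a base point `x̂` with
`f(x̂) ≠ 0` are linearly independent as vectors in `F^(2^n)`. -/
theorem shiftBasis_linearIndependent {F : Type*} [Field F] {n : ℕ}
    (f : (Fin n → Bool) → F) (xh : Fin n → Bool) (hf : f xh ≠ 0) :
    LinearIndependent F (fun i : Fin n => shiftBasis f xh i) :=
  linearIndependent_of_apply_eq_zero_of_ne (fun j => bxor xh (eVec j))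
    (fun _ _ => shiftBasis_apply_bxor_eVec_of_ne f xh)
    (fun i => (shiftBasis_apply_bxor_eVec_self f xh i).symm ▸ hf)
end

section
/- If f : {0,1}^n → F has even parity (f(x) = 0 whenever the Hamming weight |x| is odd) and g lies in the span of the shift basis functions s_1,…,s_n of f (with respect to some base point x̂ with f(x̂) ≠ 0 of even Hamming weight), then g has odd parity: g(x) = 0 whenever |x| is even. -/
open Finset

lemma wt_bxor_eVec_add {n : ℕ} (x : Fin n → Bool) (i : Fin n) :
    wt (bxor x (eVec i)) + (if x i then 1 else 0) = wt x + (if x i then 0 else 1) := by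
  unfold wt
  cases hxi : x i
  · have hsupp : univ.filter (fun j => bxor x (eVec i) j = true)
        = insert i (univ.filter (fun j => x j = true)) := by
      ext j
      by_cases hji : j = i
      · subst hji; simp [bxor, eVec, hxi]
      · simp [bxor, eVec, hji]
    simp [hsupp, card_insert_of_notMem, hxi]
  · have hsupp : univ.filter (fun j => bxor x (eVec i) j = true)
        = (univ.filter (fun j => x j = true)).erase i := by
      ext j
      by_cases hji : j = i
      · subst hji; simp [bxor, eVec, hxi]
      · simp [bxor, eVec, hji]
    rw [hsupp, if_pos rfl, if_pos rfl, card_erase_add_one (by simpa using hxi), add_zero]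

lemma odd_wt_bxor_eVec_iff {n : ℕ} (x : Fin n → Bool) (i : Fin n) :
    Odd (wt (bxor x (eVec i))) ↔ Even (wt x) := by
  have h := wt_bxor_eVec_add x i
  rw [← Nat.not_even_iff_odd]
  cases hxi : x i
  · simp only [hxi, Bool.false_eq_true, if_false, add_zero] at h
    simp [h, Nat.even_add_one]
  · simp only [hxi, if_true, add_zero] at h
    simp [← h, Nat.even_add_one]

lemma shiftBasis_apply_eq_zero {F : Type*} [Field F] {n : ℕ} {f : (Fin n → Bool) → F}
    (hpar : ∀ x, Odd (wt x) → f x = 0) (xh : Fin n → Bool) (i : Fin n) {x : Fin n → Bool}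
    (hx : Even (wt x)) : shiftBasis f xh i x = 0 := by
  unfold shiftBasis
  split_ifs
  · rfl
  · rw [hpar _ ((odd_wt_bxor_eVec_iff x i).2 hx), mul_zero]

lemma apply_eq_zero_of_mem_span {R α : Type*} [Semiring R] {s : Set (α → R)} {a : α}
    (hs : ∀ h ∈ s, h a = 0) {g : α → R} (hg : g ∈ Submodule.span R s) : g a = 0 :=
  (Submodule.span_le (p := LinearMap.ker (LinearMap.proj a))).2 hs hg

theorem span_shiftBasis_odd_parity_general {F : Type*} [Field F] {n : ℕ}
    (f g : (Fin n → Bool) → F) (xh : Fin n → Bool)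
    (hpar : ∀ x, Odd (wt x) → f x = 0)
    (hg : g ∈ Submodule.span F (Set.range (fun i : Fin n => shiftBasis f xh i))) :
    ∀ x, Even (wt x) → g x = 0 := by
  intro x hx
  refine apply_eq_zero_of_mem_span ?_ hg
  rintro _ ⟨i, rfl⟩
  exact shiftBasis_apply_eq_zero hpar xh i hx

/-- if `f` has even parity and `g` lies in the span of the shift basis
functions of `f` at an even-weight base point `x̂` with `f(x̂) ≠ 0`, then `g` has odd
parity. -/
theorem span_shiftBasis_odd_parity {F : Type*} [Field F] {n : ℕ}
    (f g : (Fin n → Bool) → F) (xh : Fin n → Bool)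
    (hf : f xh ≠ 0) (hxh : Even (wt xh))
    (hpar : ∀ x, Odd (wt x) → f x = 0)
    (hg : g ∈ Submodule.span F (Set.range (fun i : Fin n => shiftBasis f xh i))) :
    ∀ x, Even (wt x) → g x = 0 :=
  span_shiftBasis_odd_parity_general f g xh hpar hg
end

section
/- Recursive structure of sub-Pfaffian functions: let M be an (n+1)×(n+1) strongly skew-symmetric matrix over F and f(x) = Pf(M_x) for x ∈ {0,1}^{n+1}. Write f̲_0(y) = f(y0) and f̲_1(y) = f(y1) for y ∈ {0,1}^n. Then f̲_0(y) = Pf(M'_y) where M' is the top-left n×n block of M, and f̲_1 = Σ_{i=1}^n m(i, n+1) · s_i, where s_i are the shift basis functions of f̲_0 with base point 0…0: s_i(y) = 0 if y_i = 0 and s_i(y) = (−1)^{|y|_1^{i−1}} f̲_0(y + e_i) if y_i = 1. -/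
open Finset

/-!
Enumerate the support of `y` increasingly as `e 0 < ⋯ < e (k-1)`. Then `M_{y1}` is the
submatrix of `M` on `e 0, …, e (k-1), n`, and `pf` expands it along its last row: the `j`-th
term carries the sign `(-1)^j`, where `j` is the number of ones of `y` before `e j`, and its
minor is the submatrix on the support of `y` with `e j` removed, i.e. on that of `y + e_{e j}`.
-/

theorem Fin.strictMono_snoc {α : Type*} [Preorder α] {k : ℕ} {f : Fin k → α} (hf : StrictMono f)
    {a : α} (ha : ∀ i, f i < a) : StrictMono (Fin.snoc f a : Fin (k + 1) → α) := by
  intro i j hij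
  obtain ⟨i, rfl⟩ := Fin.exists_castSucc_eq.2 (Fin.ne_last_of_lt hij)
  induction j using Fin.lastCases with
  | last => simpa using ha i
  | cast j => simpa using hf (Fin.castSucc_lt_castSucc_iff.1 hij)

section SupportEnumeration

variable {n : ℕ} {x : Fin n → Bool} {k : ℕ} {e : Fin k → Fin n}

theorem exists_strictMono_range_eq (x : Fin n → Bool) :
    ∃ (k : ℕ) (e : Fin k → Fin n), StrictMono e ∧ ∀ i, x i = true ↔ i ∈ Set.range e := by
  set s := univ.filter fun i => x i = true
  refine ⟨s.card, s.orderEmbOfFin rfl, (s.orderEmbOfFin rfl).strictMono, fun i => ?_⟩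
  rw [range_orderEmbOfFin, mem_coe, mem_filter]
  simp

theorem filter_eq_true_eq_map (he : Function.Injective e)
    (hx : ∀ i, x i = true ↔ i ∈ Set.range e) :
    univ.filter (fun i => x i = true) = univ.map ⟨e, he⟩ := by
  ext i
  simp [hx]

theorem pwt_apply_of_strictMono (he : StrictMono e) (hx : ∀ i, x i = true ↔ i ∈ Set.range e)
    (j : Fin k) : pwt x (e j) = j := by
  have : univ.filter (fun i => i < e j ∧ x i = true) = (Iio j).map ⟨e, he.injective⟩ := by
    ext i
    simp only [mem_filter, mem_univ, true_and, hx, mem_map, mem_Iio, Function.Embedding.coeFn_mk]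
    constructor
    · rintro ⟨hlt, j', rfl⟩
      exact ⟨j', he.lt_iff_lt.mp hlt, rfl⟩
    · rintro ⟨j', hj', rfl⟩
      exact ⟨he hj', j', rfl⟩
  rw [pwt, this, card_map, Fin.card_Iio]

theorem bxor_eVec_eq_true_iff {e : Fin (k + 1) → Fin n} (he : Function.Injective e)
    (hx : ∀ i, x i = true ↔ i ∈ Set.range e) (j : Fin (k + 1)) (i : Fin n) :
    bxor x (eVec (e j)) i = true ↔ i ∈ Set.range (e ∘ j.succAbove) := by
  rw [Set.range_comp, Fin.range_succAbove, Set.image_compl_eq_range_sdiff_image he]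
  by_cases hi : i = e j
  · simp [bxor, eVec, hi, (hx _).2 ⟨j, rfl⟩]
  · simp [bxor, eVec, hi, hx]

end SupportEnumeration

section SubPf

variable {R : Type*} [CommRing R] {n : ℕ}

theorem subPf_eq_pf_submatrix (M : Matrix (Fin n) (Fin n) R) {x : Fin n → Bool} {k : ℕ}
    {e : Fin k → Fin n} (he : StrictMono e) (hx : ∀ i, x i = true ↔ i ∈ Set.range e) :
    subPf M x = pf k (M.submatrix e e) := by
  have hsupp := filter_eq_true_eq_map he.injective hx
  obtain rfl : (univ.filter fun i => x i = true).card = k := by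
    rw [hsupp, card_map, card_univ, Fintype.card_fin]
  have : e = (univ.filter fun i => x i = true).orderEmbOfFin rfl :=
    orderEmbOfFin_unique rfl (fun j => mem_filter.2 ⟨mem_univ _, (hx _).2 ⟨j, rfl⟩⟩) he
  rw [this]
  rfl

theorem subPf_snoc_false (M : Matrix (Fin (n + 1)) (Fin (n + 1)) R) (y : Fin n → Bool) :
    subPf M (Fin.snoc y false) = subPf (M.submatrix Fin.castSucc Fin.castSucc) y := by
  obtain ⟨k, e, he, hy⟩ := exists_strictMono_range_eq y
  have hsnoc : ∀ i, (Fin.snoc y false : Fin (n + 1) → Bool) i = true ↔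
      i ∈ Set.range (Fin.castSucc ∘ e) := by
    intro i
    induction i using Fin.lastCases with
    | last => simp [Set.range_comp, (Fin.castSucc_lt_last _).ne]
    | cast i => simp [Set.range_comp, hy]
  rw [subPf_eq_pf_submatrix M (Fin.strictMono_castSucc.comp he) hsnoc,
    subPf_eq_pf_submatrix _ he hy]
  rfl

theorem subPf_snoc_true (M : Matrix (Fin (n + 1)) (Fin (n + 1)) R) (y : Fin n → Bool) :
    subPf M (Fin.snoc y true) = ∑ i ∈ univ.filter (fun i => y i = true),
      (-1) ^ pwt y i * M i.castSucc (Fin.last n) *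
        subPf (M.submatrix Fin.castSucc Fin.castSucc) (bxor y (eVec i)) := by
  obtain ⟨k, e, he, hy⟩ := exists_strictMono_range_eq y
  set E : Fin (k + 1) → Fin (n + 1) := Fin.snoc (Fin.castSucc ∘ e) (Fin.last n)
  have hE : StrictMono E :=
    Fin.strictMono_snoc (Fin.strictMono_castSucc.comp he) fun _ => Fin.castSucc_lt_last _
  have hsnoc : ∀ i, (Fin.snoc y true : Fin (n + 1) → Bool) i = true ↔ i ∈ Set.range E := by
    intro i
    induction i using Fin.lastCases with
    | last => simp [E]
    | cast i => simp [E, Set.range_comp, hy, (Fin.castSucc_lt_last _).ne]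
  rw [subPf_eq_pf_submatrix M hE hsnoc, filter_eq_true_eq_map he.injective hy, sum_map]
  cases k with
  | zero => simp [pf]
  | succ k =>
    refine sum_congr rfl fun j _ => ?_
    simp only [Function.Embedding.coeFn_mk]
    rw [pwt_apply_of_strictMono he hy, subPf_eq_pf_submatrix _
      (he.comp (Fin.strictMono_succAbove j)) (bxor_eVec_eq_true_iff he.injective hy j)]
    simp [E, Matrix.submatrix]

end SubPf

theorem shiftBasis_zero_apply {F : Type*} [Field F] {n : ℕ} (f : (Fin n → Bool) → F)
    (i : Fin n) (y : Fin n → Bool) :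
    shiftBasis f (fun _ => false) i y =
      if y i = true then (-1) ^ pwt y i * f (bxor y (eVec i)) else 0 := by
  have : bxor y (fun _ => false) = y := funext fun _ => Bool.xor_false _
  cases h : y i <;> simp [shiftBasis, h, this]

theorem subPf_recursion_general {F : Type*} [Field F] {n : ℕ}
    (M : Matrix (Fin (n+1)) (Fin (n+1)) F) :
    (∀ y : Fin n → Bool,
      subPf M (Fin.snoc y false) = subPf (M.submatrix Fin.castSucc Fin.castSucc) y) ∧
    (∀ y : Fin n → Bool,
      subPf M (Fin.snoc y true) =
        ∑ i : Fin n, M i.castSucc (Fin.last n) *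
          shiftBasis (fun z => subPf (M.submatrix Fin.castSucc Fin.castSucc) z)
            (fun _ => false) i y) := by
  refine ⟨subPf_snoc_false M, fun y => ?_⟩
  rw [subPf_snoc_true, sum_filter]
  refine sum_congr rfl fun i _ => ?_
  rw [shiftBasis_zero_apply]
  split_ifs <;> ring

/-- recursive structure of sub-Pfaffian functions: restricting the
last bit to `0` gives the sub-Pfaffian of the top-left block, and restricting it to
`1` gives a linear combination of the shift basis functions at base point `0⋯0`. -/
theorem subPf_recursion {F : Type*} [Field F] {n : ℕ}
    (M : Matrix (Fin (n+1)) (Fin (n+1)) F) (hM : StronglySkew M) :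
    (∀ y : Fin n → Bool,
      subPf M (Fin.snoc y false) = subPf (M.submatrix Fin.castSucc Fin.castSucc) y) ∧
    (∀ y : Fin n → Bool,
      subPf M (Fin.snoc y true) =
        ∑ i : Fin n, M i.castSucc (Fin.last n) *
          shiftBasis (fun z => subPf (M.submatrix Fin.castSucc Fin.castSucc) z)
            (fun _ => false) i y) :=
  subPf_recursion_general M
end

section
/- Over a finite field F with |F| = s, the number of normalized standard signatures on n bits is |B_n| = s^{n(n−1)/2}. Equivalently, the map M ↦ (x ↦ Pf(M_x)) from n×n strongly skew-symmetric matrices to B_n is a bijection. -/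
/-!
A strongly skew-symmetric matrix is recovered from its sub-Pfaffians: on the support `{i, j}`
with `i < j` the sub-Pfaffian is `Pf [[0, M i j], [-M i j, 0]] = M i j`. Hence
`M ↦ (x ↦ Pf(M_x))` is injective, and `B_n` is in bijection with the strict upper triangles,
of which there are `s ^ (n(n-1)/2)`.
-/

open Finset

section SubPfaffian

variable {R : Type*} [CommRing R] {n : ℕ}

lemma pf_two (A : Matrix (Fin 2) (Fin 2) R) : pf 2 A = A 0 1 := by
  simp [pf]

lemma subPf_eq_pf_of_card_eq (M : Matrix (Fin n) (Fin n) R) (x : Fin n → Bool)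
    {s : Finset (Fin n)} (hs : univ.filter (fun i => x i = true) = s) {k : ℕ} (hk : s.card = k) :
    subPf M x = pf k (M.submatrix (s.orderEmbOfFin hk) (s.orderEmbOfFin hk)) := by
  subst hs hk
  rfl

lemma subPf_indicator_pair (M : Matrix (Fin n) (Fin n) R) {i j : Fin n} (hij : i < j) :
    subPf M (fun k => decide (k ∈ ({i, j} : Finset (Fin n)))) = M i j := by
  have hcard : ({i, j} : Finset (Fin n)).card = 2 := card_pair hij.ne
  have h0 : ({i, j} : Finset (Fin n)).orderEmbOfFin hcard 0 = i :=
    (orderEmbOfFin_zero hcard two_pos).trans (by simp [hij.le])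
  have h1 : ({i, j} : Finset (Fin n)).orderEmbOfFin hcard 1 = j :=
    (orderEmbOfFin_last hcard two_pos).trans (by simp [hij.le])
  rw [subPf_eq_pf_of_card_eq M _ (by ext; simp) hcard, pf_two, Matrix.submatrix_apply, h0, h1]

end SubPfaffian

namespace StronglySkew

variable {R : Type*} [CommRing R] {n : ℕ}

lemma ext_of_lt {M N : Matrix (Fin n) (Fin n) R} (hM : StronglySkew M) (hN : StronglySkew N)
    (h : ∀ i j, i < j → M i j = N i j) : M = N := by
  ext i j
  rcases lt_trichotomy i j with hij | rfl | hij
  · exact h i j hij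
  · rw [hM.2, hN.2]
  · rw [hM.1, hN.1, h j i hij]

def ofUpper (g : {p : Fin n × Fin n // p.1 < p.2} → R) : Matrix (Fin n) (Fin n) R :=
  fun i j => if h : i < j then g ⟨(i, j), h⟩ else if h' : j < i then -g ⟨(j, i), h'⟩ else 0

lemma stronglySkew_ofUpper (g : {p : Fin n × Fin n // p.1 < p.2} → R) :
    StronglySkew (ofUpper g) := by
  refine ⟨fun i j => ?_, fun i => by simp [ofUpper]⟩
  rcases lt_trichotomy i j with hij | rfl | hij
  · simp [ofUpper, hij, hij.not_gt]
  · simp [ofUpper]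
  · simp [ofUpper, hij, hij.not_gt]

def equivUpper (R : Type*) [CommRing R] (n : ℕ) :
    {M : Matrix (Fin n) (Fin n) R // StronglySkew M} ≃ ({p : Fin n × Fin n // p.1 < p.2} → R) where
  toFun M p := M.1 p.1.1 p.1.2
  invFun g := ⟨ofUpper g, stronglySkew_ofUpper g⟩
  left_inv M := Subtype.ext <|
    ext_of_lt (stronglySkew_ofUpper fun p => M.1 p.1.1 p.1.2) M.2 fun _ _ h => dif_pos h
  right_inv _ := funext fun p => dif_pos p.2

end StronglySkew

lemma Fin.card_pairs_lt (n : ℕ) :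
    Fintype.card {p : Fin n × Fin n // p.1 < p.2} = n * (n - 1) / 2 := by
  let e : {p : Fin n × Fin n // p.1 < p.2} ≃ Σ j : Fin n, Fin j :=
    { toFun p := ⟨p.1.2, ⟨p.1.1, p.2⟩⟩
      invFun q := ⟨(⟨q.2, q.2.2.trans q.1.2⟩, q.1), q.2.2⟩ }
  rw [Fintype.card_congr e, Fintype.card_sigma]
  simp only [Fintype.card_fin]
  rw [Fin.sum_univ_eq_sum_range (fun i => i) n, sum_range_id]

lemma injective_subPf (R : Type*) [CommRing R] (n : ℕ) :
    Function.Injective fun M : {M : Matrix (Fin n) (Fin n) R // StronglySkew M} =>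
      (fun x => subPf M.1 x : (Fin n → Bool) → R) := by
  intro M N h
  refine Subtype.ext <| M.2.ext_of_lt N.2 fun i j hij => ?_
  simpa only [subPf_indicator_pair _ hij] using
    congr_fun h fun k => decide (k ∈ ({i, j} : Finset (Fin n)))

lemma Bset_eq_range (F : Type*) [Field F] (n : ℕ) :
    Bset F n = Set.range fun M : {M : Matrix (Fin n) (Fin n) F // StronglySkew M} =>
      (fun x => subPf M.1 x : (Fin n → Bool) → F) := by
  ext f
  constructor
  · rintro ⟨M, hM, hf⟩
    exact ⟨⟨M, hM⟩, funext fun x => (hf x).symm⟩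
  · rintro ⟨M, rfl⟩
    exact ⟨M.1, M.2, fun _ => rfl⟩

/-- over a finite field of size `s`, the number of normalized standard
signatures on `n` bits is `s^(n(n-1)/2)`; equivalently, `M ↦ (x ↦ Pf(M_x))` is
injective on strongly skew-symmetric matrices (it is surjective onto `B_n` by
definition). -/
theorem card_Bset {F : Type*} [Field F] [Fintype F] {n : ℕ} :
    Nat.card {f : (Fin n → Bool) → F // f ∈ Bset F n} =
      (Fintype.card F) ^ (n * (n - 1) / 2) ∧
    Function.Injective
      (fun M : {M : Matrix (Fin n) (Fin n) F // StronglySkew M} =>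
        (fun x => subPf M.1 x : (Fin n → Bool) → F)) := by
  refine ⟨?_, injective_subPf F n⟩
  calc Nat.card {f : (Fin n → Bool) → F // f ∈ Bset F n}
      = Nat.card {M : Matrix (Fin n) (Fin n) F // StronglySkew M} := by
        rw [Bset_eq_range]; exact Nat.card_range_of_injective (injective_subPf F n)
    _ = Fintype.card F ^ (n * (n - 1) / 2) := by
        rw [Nat.card_congr (StronglySkew.equivUpper F n), Nat.card_eq_fintype_card,
          Fintype.card_fun, Fin.card_pairs_lt]
end
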